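/- The k-th Fourier coefficient of the periodic function Q_c(x) = Σ_{n∈ℤ} A(c(n-x)), where A(x) = exp(-2x - (1/2)exp(-2x)) and c > 0, is a_k = ∫₀¹ Q_c(x) e^{-2πikx} dx = (2^{-πik/c}/c) · Γ(1 - πik/c). -/

import Mathlib

/-!
`Q_c` is the `1`-periodization of `g y = A (-c y)`, so its `k`-th Fourier coefficient is the
Fourier transform `𝓕 g k`; this is the key step of Poisson summation, which applies because `A`
decays like `|y| ^ (-2)`. Substituting `e ^ u = exp (-2 x) / 2` turns `∫ A x * exp (t x) dx` into
`2 ^ (1 - t/2) / 2 * ∫ exp (s u - e ^ u) du` with `s = 1 - t/2`, and the last integral is `Γ(s)`.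
-/

open Complex

/-- The density of `(Z - log 2)/2` for `Z` standard Gumbel, as a function on `ℂ`. -/
noncomputable def gumbelA (x : ℂ) : ℂ :=
  Complex.exp (-2 * x - (1 / 2) * Complex.exp (-2 * x))

/-- The cycling profile `Q_c(x) = Σ_{n∈ℤ} A(c(n - x))` for real `x`. -/
noncomputable def cyclingProfile (c : ℝ) (x : ℝ) : ℂ :=
  ∑' n : ℤ, gumbelA (c * (n - x))

open Real Filter Asymptotics MeasureTheory
open scoped FourierTransform

theorem Real.intervalIntegral_tsum_comp_add_mul_cexp_eq_fourier {f : ℝ → ℂ} (hf : Continuous f)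
    {b : ℝ} (hb : 1 < b) (hdecay : f =O[cocompact ℝ] (|·| ^ (-b))) (k : ℤ) :
    ∫ x in (0 : ℝ)..1, (∑' n : ℤ, f (x + n)) * cexp (-2 * π * I * k * x) = 𝓕 f k := by
  let F : C(ℝ, ℂ) := ⟨f, hf⟩
  have hsum (K : TopologicalSpace.Compacts ℝ) :
      Summable fun n : ℤ => ‖(F.comp (ContinuousMap.addRight n)).restrict K‖ :=
    summable_of_isBigO (Real.summable_abs_int_rpow hb)
      ((isBigO_norm_restrict_cocompact F (zero_lt_one.trans hb) hdecay K).comp_tendsto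
        Int.tendsto_coe_cofinite)
  rw [show 𝓕 f k = 𝓕 (F : ℝ → ℂ) k from rfl, ← Real.fourierCoeff_tsum_comp_add hsum k,
    fourierCoeff_eq_intervalIntegral _ k 0]
  simp only [div_one, one_smul, zero_add]
  refine intervalIntegral.integral_congr fun x _ => ?_
  simp_rw [smul_eq_mul, Function.Periodic.lift_coe, fourier_coe_apply, zsmul_one]
  rw [← ContinuousMap.tsum_apply (ContinuousMap.summable_of_locally_summable_norm hsum), mul_comm]
  push_cast
  ring_nf
  rfl

@[fun_prop]
lemma continuous_gumbelA : Continuous gumbelA := by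
  unfold gumbelA; fun_prop

lemma norm_gumbelA_ofReal (t : ℝ) :
    ‖gumbelA t‖ = Real.exp (-2 * t - Real.exp (-2 * t) / 2) := by
  rw [gumbelA, ← Complex.ofReal_ofNat, ← Complex.ofReal_neg, ← Complex.ofReal_mul,
    ← Complex.ofReal_exp, Complex.norm_exp]
  norm_cast
  ring_nf

lemma norm_gumbelA_mul_sq_le (t : ℝ) : ‖gumbelA t‖ * t ^ 2 ≤ 4 := by
  rw [norm_gumbelA_ofReal]
  have hexp (u : ℝ) : 2 * u ^ 2 ≤ Real.exp (2 * |u|) := by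
    have := Real.quadratic_le_exp_of_nonneg (mul_nonneg zero_le_two (abs_nonneg u))
    nlinarith [sq_abs u, abs_nonneg u]
  rcases le_total 0 t with ht | ht
  · have h := hexp t
    rw [abs_of_nonneg ht] at h
    calc Real.exp (-2 * t - Real.exp (-2 * t) / 2) * t ^ 2
        ≤ Real.exp (-2 * t) * (Real.exp (2 * t) / 2) := by
          gcongr
          · linarith [Real.exp_pos (-2 * t)]
          · linarith
      _ = 1 / 2 := by rw [← mul_div_assoc, ← Real.exp_add]; norm_num
      _ ≤ 4 := by norm_num
  · set u := Real.exp (-2 * t) with hu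
    have hu0 : 0 < u := Real.exp_pos _
    have ht2 : 2 * t ^ 2 ≤ u := by simpa [abs_of_nonpos ht, hu] using hexp t
    have hu2 : u ^ 2 / 8 ≤ Real.exp (u / 2) := by
      nlinarith [Real.quadratic_le_exp_of_nonneg (by positivity : 0 ≤ u / 2)]
    calc Real.exp (-2 * t - u / 2) * t ^ 2 = u * t ^ 2 / Real.exp (u / 2) := by
          rw [Real.exp_sub]; ring
      _ ≤ u * (u / 2) / (u ^ 2 / 8) := by gcongr; linarith
      _ = 4 := by field_simp; ring

lemma isBigO_gumbelA_comp_mul {a : ℝ} (ha : a ≠ 0) :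
    (fun y : ℝ => gumbelA (a * y)) =O[cocompact ℝ] (|·| ^ (-2 : ℝ)) := by
  refine IsBigO.of_bound (4 / a ^ 2) ?_
  filter_upwards [(isCompact_singleton (x := (0 : ℝ))).compl_mem_cocompact] with y hy
  have hy : y ≠ 0 := hy
  have h := norm_gumbelA_mul_sq_le (a * y)
  push_cast at h
  rw [Real.norm_of_nonneg (by positivity), Real.rpow_neg (abs_nonneg y), Real.rpow_two, sq_abs]
  rw [div_mul_eq_mul_div, le_div_iff₀ (by positivity)]
  calc ‖gumbelA (a * y)‖ * a ^ 2 = ‖gumbelA (a * y)‖ * (a * y) ^ 2 * (y ^ 2)⁻¹ := by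
        field_simp
    _ ≤ 4 * (y ^ 2)⁻¹ := by gcongr

lemma Complex.integral_cexp_mul_sub_exp {s : ℂ} (hs : 0 < s.re) :
    ∫ u : ℝ, cexp (s * u - Real.exp u) = Gamma s := by
  have hderiv (u : ℝ) (_ : u ∈ Set.univ) : HasDerivWithinAt Real.exp (Real.exp u) Set.univ u :=
    (Real.hasDerivAt_exp u).hasDerivWithinAt
  rw [Gamma_eq_integral hs, GammaIntegral, ← Real.range_exp, ← Set.image_univ,
    integral_image_eq_integral_abs_deriv_smul MeasurableSet.univ hderiv
      Real.exp_injective.injOn, setIntegral_univ]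
  refine integral_congr_ae (ae_of_all _ fun u => ?_)
  dsimp only
  rw [abs_of_pos (Real.exp_pos u), cpow_def_of_ne_zero (by exact_mod_cast (Real.exp_pos u).ne'),
    ← ofReal_log (Real.exp_pos u).le, Real.log_exp, real_smul,
    ofReal_exp, ofReal_exp, ← exp_add, ← exp_add]
  push_cast
  ring_nf

lemma gumbelA_mul_cexp_eq (t : ℂ) (x : ℝ) :
    gumbelA x * cexp (t * x) =
      2 ^ (1 - t / 2) * cexp ((1 - t / 2) * ↑(-2 * (x + Real.log 2 / 2))
        - Real.exp (-2 * (x + Real.log 2 / 2))) := by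
  have hshift : Real.exp (-2 * (x + Real.log 2 / 2)) = Real.exp (-2 * x) / 2 := by
    rw [show -2 * (x + Real.log 2 / 2) = -2 * x - Real.log 2 by ring, Real.exp_sub,
      Real.exp_log two_pos]
  have hlog : Complex.log 2 = ↑(Real.log 2) := by
    rw [ofReal_log zero_le_two, ofReal_ofNat]
  rw [hshift, gumbelA, cpow_def_of_ne_zero two_ne_zero, hlog, ← Complex.exp_add,
    ← Complex.exp_add]
  congr 1
  push_cast
  ring

lemma integral_gumbelA_mul_cexp {t : ℂ} (ht : t.re < 2) :
    ∫ x : ℝ, gumbelA x * cexp (t * x) = 2 ^ (-t / 2) * Gamma (1 - t / 2) := by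
  have hs : 0 < (1 - t / 2).re := by simp; linarith
  simp_rw [gumbelA_mul_cexp_eq, integral_const_mul]
  rw [integral_add_right_eq_self (fun y => cexp ((1 - t / 2) * ↑(-2 * y) - Real.exp (-2 * y))),
    Measure.integral_comp_mul_left (fun u => cexp ((1 - t / 2) * u - Real.exp u)),
    integral_cexp_mul_sub_exp hs]
  rw [sub_eq_add_neg, cpow_add _ _ two_ne_zero, cpow_one, ← neg_div]
  norm_num [real_smul]
  ring

lemma fourier_gumbelA_comp_mul {a : ℝ} (ha : a ≠ 0) (ξ : ℝ) :
    𝓕 (fun y : ℝ => gumbelA (a * y)) ξ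
      = |a|⁻¹ * (2 ^ (π * I * ξ / a) * Gamma (1 + π * I * ξ / a)) := by
  have ht : (-2 * π * I * ξ / a : ℂ).re < 2 := by
    rw [show (-2 * π * I * ξ / a : ℂ) = ↑(-2 * π * ξ / a) * I by push_cast; ring]
    simp
  have ha' : (a : ℂ) ≠ 0 := ofReal_ne_zero.mpr ha
  calc 𝓕 (fun y : ℝ => gumbelA (a * y)) ξ
      = ∫ v : ℝ, gumbelA ↑(a * v) * cexp (-2 * π * I * ξ / a * ↑(a * v)) := by
        rw [Real.fourier_real_eq_integral_exp_smul]
        refine integral_congr_ae (ae_of_all _ fun v => ?_)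
        dsimp only
        rw [smul_eq_mul, mul_comm]
        congr 2
        · push_cast; ring
        · push_cast; field_simp
    _ = |a⁻¹| • ∫ u : ℝ, gumbelA u * cexp (-2 * π * I * ξ / a * u) :=
        Measure.integral_comp_mul_left (fun u : ℝ => gumbelA u * cexp (-2 * π * I * ξ / a * u))
          a
    _ = |a|⁻¹ * (2 ^ (π * I * ξ / a) * Gamma (1 + π * I * ξ / a)) := by
        rw [integral_gumbelA_mul_cexp ht, abs_inv, real_smul]
        push_cast
        ring_nf

lemma cyclingProfile_eq_tsum (c x : ℝ) :
    cyclingProfile c x = ∑' n : ℤ, gumbelA ((-c : ℝ) * (x + n : ℝ)) := by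
  rw [cyclingProfile, ← (Equiv.neg ℤ).tsum_eq]
  congr 1 with n
  push_cast [Equiv.neg_apply]
  ring_nf

/-- The `k`-th Fourier coefficient of the periodic function `Q_c` is
`a_k = ∫₀¹ Q_c(x) e^{-2πikx} dx = (2^{-πik/c}/c) Γ(1 - πik/c)`. -/
theorem cyclingProfile_fourier_coeff (c : ℝ) (hc : 0 < c) (k : ℤ) :
    ∫ x in (0:ℝ)..1, cyclingProfile c x * Complex.exp (-2 * Real.pi * Complex.I * k * x)
      = (2 : ℂ) ^ (-(Real.pi * Complex.I * k) / c) / c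
          * Complex.Gamma (1 - Real.pi * Complex.I * k / c) := by
  have hc' : -c ≠ 0 := neg_ne_zero.mpr hc.ne'
  simp_rw [cyclingProfile_eq_tsum]
  rw [Real.intervalIntegral_tsum_comp_add_mul_cexp_eq_fourier (by fun_prop) one_lt_two
    (isBigO_gumbelA_comp_mul hc') k, fourier_gumbelA_comp_mul hc']
  rw [abs_neg, abs_of_pos hc]
  push_cast
  rw [div_neg, ← sub_eq_add_neg, neg_div]
  ring
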